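/- arXiv:1509.00229 — 2 statements merged into one kernel-verified Lean document; each statement's English description precedes it below -/
import Mathlib

section
/- Let Ω = ℝ^d/ℤ^d, let h : Ω → ℝ be continuous with ĥ(ξ) ≠ 0 for all ξ ∈ ℤ^d, and let (μ_N) be a sequence of finite signed Borel measures on Ω with ‖μ_N‖_TV ≤ M < +∞ for all N. Then lim_{N→∞} N_h(μ_N) = 0 if and only if (μ_N) converges weakly to 0, i.e. ∫_Ω f dμ_N → 0 for every continuous f : Ω → ℝ. -/
open MeasureTheory Filter Topology
open scoped NNReal ENNReal

noncomputable section

/-- The `d`-dimensional torus `Ω = ℝ^d/ℤ^d`. -/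
abbrev Torus (d : ℕ) : Type := Fin d → AddCircle (1 : ℝ)

/-- Convolution `(h ⋆ μ)(x) = ∫ h(x−y) dμ(y)` of a function with a finite signed
measure, via the Jordan decomposition of `μ`. -/
def convSigned {d : ℕ} (h : Torus d → ℝ) (μ : SignedMeasure (Torus d)) (x : Torus d) : ℝ :=
  ∫ y, h (x - y) ∂μ.toJordanDecomposition.posPart -
    ∫ y, h (x - y) ∂μ.toJordanDecomposition.negPart

/-- `N_h(μ) = ‖h ⋆ μ‖_{L²(Ω)}` for a signed measure `μ`. -/
def nhSigned {d : ℕ} (h : Torus d → ℝ) (μ : SignedMeasure (Torus d)) : ℝ :=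
  Real.sqrt (∫ x, (convSigned h μ x) ^ 2)

/-- The total variation norm `‖μ‖_TV` of a signed measure. -/
def tvNorm {d : ℕ} (μ : SignedMeasure (Torus d)) : ℝ := (μ.totalVariation Set.univ).toReal

/-- The integral `∫ f dμ` of a function against a signed measure. -/
def signedIntegral {d : ℕ} (μ : SignedMeasure (Torus d)) (f : Torus d → ℝ) : ℝ :=
  ∫ y, f y ∂μ.toJordanDecomposition.posPart - ∫ y, f y ∂μ.toJordanDecomposition.negPart

/-- The Fourier coefficient `ĥ(ξ) = ∫_Ω e^{−2πi⟨ξ,x⟩} h(x) dx`, `ξ ∈ ℤ^d`. -/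
def torusFourierCoeff {d : ℕ} (h : Torus d → ℝ) (ξ : Fin d → ℤ) : ℂ :=
  ∫ x : Torus d, (∏ i, fourier (-(ξ i)) (x i)) * (h x : ℂ)

/-- `(h ⋆ (μ − ν))(x)` for two (finite) measures `μ, ν`. -/
def convDiff {d : ℕ} (h : Torus d → ℝ) (μ ν : Measure (Torus d)) (x : Torus d) : ℝ :=
  ∫ y, h (x - y) ∂μ - ∫ y, h (x - y) ∂ν

/-- `N_h(μ − ν) = ‖h ⋆ (μ − ν)‖_{L²(Ω)}`. -/
def nhDist {d : ℕ} (h : Torus d → ℝ) (μ ν : Measure (Torus d)) : ℝ :=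
  Real.sqrt (∫ x, (convDiff h μ ν x) ^ 2)

/-- The L¹ Wasserstein (Kantorovich) distance: infimum of `∫ dist(x,y) dc` over
all couplings `c` of `μ` and `ν`. -/
def W1 {d : ℕ} (μ ν : Measure (Torus d)) : ℝ :=
  sInf { r | ∃ c : Measure (Torus d × Torus d),
    c.map Prod.fst = μ ∧ c.map Prod.snd = ν ∧ r = ∫ p, dist p.1 p.2 ∂c }

/-- The set `𝓜(Ω^N)` of `N`-point measures `(1/N) ∑ δ_{p_i}`. -/
def nPointMeasures (d N : ℕ) : Set (Measure (Torus d)) :=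
  { μ | ∃ p : Fin N → Torus d, μ = (N : ℝ≥0∞)⁻¹ • ∑ i, Measure.dirac (p i) }

/-- Hausdorff distance between two sets of measures with respect to the metric
`(μ, ν) ↦ N_h(μ − ν)`. -/
def hausNh {d : ℕ} (h : Torus d → ℝ) (A B : Set (Measure (Torus d))) : ℝ :=
  max (sSup ((fun μ => sInf ((fun ν => nhDist h μ ν) '' B)) '' A))
      (sSup ((fun ν => sInf ((fun μ => nhDist h μ ν) '' A)) '' B))

/-!
Pairing with a signed measure `μ` is a continuous linear functional on `C(Ω)` of norm at most
`‖μ‖_TV`. Integrating `h ⋆ μ` against the character `e_{-ξ}` gives `ĥ(ξ) ∫ e_{-ξ} dμ`, and by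
Cauchy–Schwarz this is at most `N_h(μ)`; as `ĥ(ξ) ≠ 0`, `N_h(μ_N) → 0` forces `∫ e_ξ dμ_N → 0` for
every `ξ`. The uniform bound `‖μ_N‖_TV ≤ M` makes the functionals equicontinuous, so convergence
on the trigonometric polynomials, which are dense by Stone–Weierstrass, extends to every continuous
test function. Conversely, weak convergence gives `(h ⋆ μ_N)(x) = ∫ h(x - ·) dμ_N → 0` for each
`x`, with `|h ⋆ μ_N| ≤ M ‖h‖_∞`, and dominated convergence yields `N_h(μ_N) → 0`.
-/

lemma Continuous.integrable_of_compactSpace {X E : Type*} [TopologicalSpace X] [CompactSpace X]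
    [MeasurableSpace X] [OpensMeasurableSpace X] [NormedAddCommGroup E] {f : X → E}
    (hf : Continuous f) (μ : Measure X) [IsFiniteMeasure μ] : Integrable f μ :=
  hf.integrable_of_hasCompactSupport (.of_compactSpace f)

namespace MeasureTheory.SignedMeasure

variable {X : Type*} [TopologicalSpace X] [CompactSpace X] [MeasurableSpace X]
  {𝕜 : Type*} [RCLike 𝕜]

lemma norm_integral_posPart_sub_integral_negPart_le (μ : SignedMeasure X) (g : C(X, 𝕜)) :
    ‖∫ x, g x ∂μ.toJordanDecomposition.posPart - ∫ x, g x ∂μ.toJordanDecomposition.negPart‖ ≤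
      (μ.totalVariation Set.univ).toReal * ‖g‖ := by
  rw [totalVariation, Measure.add_apply, ENNReal.toReal_add (measure_ne_top _ _)
    (measure_ne_top _ _), add_mul]
  refine (norm_sub_le _ _).trans (add_le_add ?_ ?_) <;>
  · rw [mul_comm]
    exact norm_integral_le_of_norm_le_const (.of_forall g.norm_coe_le_norm)

variable [OpensMeasurableSpace X]

def integralCLM (μ : SignedMeasure X) : C(X, 𝕜) →L[𝕜] 𝕜 :=
  LinearMap.mkContinuous
    { toFun g := ∫ x, g x ∂μ.toJordanDecomposition.posPart -
        ∫ x, g x ∂μ.toJordanDecomposition.negPart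
      map_add' f g := by
        simp only [ContinuousMap.coe_add, Pi.add_apply]
        rw [integral_add (f.continuous.integrable_of_compactSpace _)
            (g.continuous.integrable_of_compactSpace _),
          integral_add (f.continuous.integrable_of_compactSpace _)
            (g.continuous.integrable_of_compactSpace _)]
        ring
      map_smul' c g := by
        simp only [ContinuousMap.coe_smul, Pi.smul_apply, integral_smul, smul_sub,
          RingHom.id_apply] }
    (μ.totalVariation Set.univ).toReal (norm_integral_posPart_sub_integral_negPart_le μ)

lemma integralCLM_apply (μ : SignedMeasure X) (g : C(X, 𝕜)) :
    integralCLM μ g =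
      ∫ x, g x ∂μ.toJordanDecomposition.posPart - ∫ x, g x ∂μ.toJordanDecomposition.negPart :=
  rfl

lemma norm_integralCLM_le (μ : SignedMeasure X) :
    ‖(integralCLM μ : C(X, 𝕜) →L[𝕜] 𝕜)‖ ≤ (μ.totalVariation Set.univ).toReal :=
  LinearMap.mkContinuous_norm_le _ ENNReal.toReal_nonneg _

lemma integralCLM_ofReal (μ : SignedMeasure X) (g : C(X, ℝ)) :
    integralCLM μ ⟨fun x => (g x : 𝕜), by fun_prop⟩ = (integralCLM (𝕜 := ℝ) μ g : 𝕜) := by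
  simp only [integralCLM_apply, ContinuousMap.coe_mk, integral_ofReal, RCLike.ofReal_sub]

end MeasureTheory.SignedMeasure

theorem ContinuousLinearMap.tendsto_apply_zero_of_tendsto_on_dense_span {ι 𝕜 E F : Type*}
    [NontriviallyNormedField 𝕜] [NormedAddCommGroup E] [NormedSpace 𝕜 E]
    [NormedAddCommGroup F] [NormedSpace 𝕜 F] {l : Filter ι} {L : ι → E →L[𝕜] F} {C : ℝ}
    (hL : ∀ i, ‖L i‖ ≤ C) {S : Set E} (hS : (Submodule.span 𝕜 S).topologicalClosure = ⊤)
    (hLS : ∀ s ∈ S, Tendsto (fun i => L i s) l (𝓝 0)) (x : E) :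
    Tendsto (fun i => L i x) l (𝓝 0) := by
  have hequi : Equicontinuous ((↑) ∘ L : ι → E → F) :=
    ((NormedSpace.equicontinuous_TFAE L).out 1 5).2 (⟨C, hL⟩ : ∃ C, ∀ i, ‖L i‖ ≤ C)
  have hclosed : IsClosed {x | Tendsto (fun i => L i x) l (𝓝 0)} :=
    hequi.isClosed_setOfPred_tendsto continuous_const
  have hspan : ∀ y ∈ Submodule.span 𝕜 S, Tendsto (fun i => L i y) l (𝓝 0) := by
    intro y hy
    induction hy using Submodule.span_induction with
    | mem s hs => exact hLS s hs
    | zero => simpa using tendsto_const_nhds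
    | add y z _ _ hy hz => simpa using hy.add hz
    | smul c y _ hy => simpa using hy.const_smul c
  have hx : x ∈ closure (Submodule.span 𝕜 S : Set E) := by
    rw [← Submodule.topologicalClosure_coe, hS]
    trivial
  exact closure_minimal hspan hclosed hx

section SquareIntegral

variable {Ω : Type*} [MeasurableSpace Ω] {μ : Measure Ω} [IsProbabilityMeasure μ] {F : Ω → ℝ}

lemma sq_integral_le_integral_sq (hF : MemLp F 2 μ) : (∫ x, F x ∂μ) ^ 2 ≤ ∫ x, F x ^ 2 ∂μ := by
  have := ProbabilityTheory.variance_eq_sub hF ▸ ProbabilityTheory.variance_nonneg F μ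
  simpa only [Pi.pow_apply, sub_nonneg] using this

lemma norm_integral_mul_le_sqrt_integral_sq {𝕜 : Type*} [RCLike 𝕜] {χ : Ω → 𝕜}
    (hχ : ∀ x, ‖χ x‖ ≤ 1) (hF : MemLp F 2 μ) :
    ‖∫ x, χ x * F x ∂μ‖ ≤ √(∫ x, F x ^ 2 ∂μ) := by
  have hnorm : ∀ x, ‖χ x * F x‖ ≤ |F x| := fun x => by
    simpa [norm_mul] using mul_le_of_le_one_left (abs_nonneg (F x)) (hχ x)
  calc ‖∫ x, χ x * F x ∂μ‖ ≤ ∫ x, |F x| ∂μ :=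
        norm_integral_le_of_norm_le (hF.integrable one_le_two).abs (.of_forall hnorm)
    _ ≤ √(∫ x, F x ^ 2 ∂μ) := by
        refine Real.le_sqrt_of_sq_le ?_
        simpa only [Pi.abs_apply, sq_abs] using sq_integral_le_integral_sq hF.abs

end SquareIntegral

section CompactGroup

variable {G : Type*} [AddCommGroup G] [TopologicalSpace G] [IsTopologicalAddGroup G]
  [CompactSpace G] [SecondCountableTopology G] [MeasurableSpace G] [BorelSpace G]

lemma continuous_integral_apply_sub {E : Type*} [NormedAddCommGroup E] [NormedSpace ℝ E]
    (ν : Measure G) [IsFiniteMeasure ν] (h : C(G, E)) :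
    Continuous fun x => ∫ y, h (x - y) ∂ν := by
  simpa using continuous_parametric_integral_of_continuous (μ := ν)
    (f := fun x y => h (x - y)) (by fun_prop) isCompact_univ

lemma integral_mul_integral_sub_eq_mul_integral (μ ν : Measure G) [IsFiniteMeasure μ]
    [μ.IsAddRightInvariant] [IsFiniteMeasure ν] {χ h : G → ℂ} (hχc : Continuous χ)
    (hχ : ∀ x y, χ (x + y) = χ x * χ y) (hh : Continuous h) :
    ∫ x, χ x * ∫ y, h (x - y) ∂ν ∂μ = (∫ z, χ z * h z ∂μ) * ∫ y, χ y ∂ν := by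
  have hint : Integrable (Function.uncurry fun x y => χ x * h (x - y)) (μ.prod ν) :=
    Continuous.integrable_of_compactSpace (by fun_prop) _
  calc ∫ x, χ x * ∫ y, h (x - y) ∂ν ∂μ = ∫ x, ∫ y, χ x * h (x - y) ∂ν ∂μ := by
        simp only [integral_const_mul]
    _ = ∫ y, ∫ x, χ x * h (x - y) ∂μ ∂ν := integral_integral_swap hint
    _ = ∫ y, (∫ z, χ z * h z ∂μ) * χ y ∂ν := by
        congr 1 with y
        rw [← integral_add_right_eq_self _ y, ← integral_mul_const]
        simp only [add_sub_cancel_right, hχ, mul_right_comm]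
    _ = (∫ z, χ z * h z ∂μ) * ∫ y, χ y ∂ν := integral_const_mul _ _

end CompactGroup

instance : IsProbabilityMeasure (volume : Measure UnitAddCircle) :=
  ⟨by simp [AddCircle.measure_univ]⟩

open SignedMeasure UnitAddTorus

lemma UnitAddTorus.mFourier_apply_add {ι : Type*} [Fintype ι] (n : ι → ℤ)
    (x y : UnitAddTorus ι) : mFourier n (x + y) = mFourier n x * mFourier n y := by
  simp only [mFourier, ContinuousMap.coe_mk, Pi.add_apply, fourier_apply, smul_add,
    AddCircle.toCircle_add, Circle.coe_mul, Finset.prod_mul_distrib]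

section Torus

variable {d : ℕ}

lemma continuous_convSigned (h : C(Torus d, ℝ)) (μ : SignedMeasure (Torus d)) :
    Continuous (convSigned h μ) :=
  (continuous_integral_apply_sub _ h).sub (continuous_integral_apply_sub _ h)

lemma abs_convSigned_le (h : C(Torus d, ℝ)) (μ : SignedMeasure (Torus d)) (x : Torus d) :
    |convSigned h μ x| ≤ tvNorm μ * ‖h‖ := by
  rw [convSigned, ← Real.norm_eq_abs]
  refine (norm_integral_posPart_sub_integral_negPart_le μ
    (h.comp ⟨(x - ·), by fun_prop⟩)).trans (mul_le_mul_of_nonneg_left ?_ ENNReal.toReal_nonneg)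
  exact (ContinuousMap.norm_le _ (norm_nonneg h)).2 fun y => h.norm_coe_le_norm _

lemma integral_mFourier_mul_convSigned (h : C(Torus d, ℝ)) (μ : SignedMeasure (Torus d))
    (ξ : Fin d → ℤ) :
    ∫ x, mFourier (-ξ) x * convSigned h μ x =
      torusFourierCoeff h ξ * integralCLM μ (mFourier (-ξ)) := by
  have hpart : ∀ (ν : Measure (Torus d)) [IsFiniteMeasure ν],
      ∫ x, mFourier (-ξ) x * ((∫ y, h (x - y) ∂ν : ℝ) : ℂ) =
        torusFourierCoeff h ξ * ∫ y, mFourier (-ξ) y ∂ν := fun ν _ => by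
    simp only [← integral_complex_ofReal]
    exact integral_mul_integral_sub_eq_mul_integral _ ν (mFourier _).continuous
      (mFourier_apply_add _) (Complex.continuous_ofReal.comp h.continuous)
  have hint : ∀ (ν : Measure (Torus d)) [IsFiniteMeasure ν],
      Integrable (fun x => mFourier (-ξ) x * ((∫ y, h (x - y) ∂ν : ℝ) : ℂ)) :=
    fun ν _ => Continuous.integrable_of_compactSpace
      ((mFourier _).continuous.mul (Complex.continuous_ofReal.comp
        (continuous_integral_apply_sub ν h))) _
  simp only [convSigned, Complex.ofReal_sub, mul_sub]
  rw [integral_sub (hint _) (hint _), hpart, hpart, integralCLM_apply, mul_sub]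

lemma integralCLM_eq_signedIntegral (μ : SignedMeasure (Torus d)) (f : C(Torus d, ℝ)) :
    integralCLM μ f = signedIntegral μ f :=
  rfl

lemma norm_torusFourierCoeff_mul_le_nhSigned (h : C(Torus d, ℝ)) (μ : SignedMeasure (Torus d))
    (ξ : Fin d → ℤ) :
    ‖torusFourierCoeff h ξ‖ * ‖integralCLM μ (mFourier (-ξ))‖ ≤ nhSigned h μ := by
  rw [← norm_mul, ← integral_mFourier_mul_convSigned]
  refine norm_integral_mul_le_sqrt_integral_sq (fun x => ?_)
    ((continuous_convSigned h μ).memLp_of_hasCompactSupport (.of_compactSpace _))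
  exact ((mFourier (-ξ)).norm_coe_le_norm x).trans_eq mFourier_norm

lemma tendsto_signedIntegral_of_tendsto_nhSigned {h : C(Torus d, ℝ)}
    (hfc : ∀ ξ : Fin d → ℤ, torusFourierCoeff h ξ ≠ 0) {μ : ℕ → SignedMeasure (Torus d)}
    {M : ℝ} (hM : ∀ N, tvNorm (μ N) ≤ M)
    (hnh : Tendsto (fun N => nhSigned h (μ N)) atTop (𝓝 0)) (f : C(Torus d, ℝ)) :
    Tendsto (fun N => signedIntegral (μ N) f) atTop (𝓝 0) := by
  have hchar (ξ : Fin d → ℤ) :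
      Tendsto (fun N => integralCLM (μ N) (mFourier (-ξ))) atTop (𝓝 0) := by
    have hc : 0 < ‖torusFourierCoeff h ξ‖ := norm_pos_iff.2 (hfc ξ)
    refine squeeze_zero_norm (fun N => ?_) (by simpa using hnh.div_const ‖torusFourierCoeff h ξ‖)
    rw [le_div_iff₀' hc]
    exact norm_torusFourierCoeff_mul_le_nhSigned h (μ N) ξ
  have hnorm (N : ℕ) : ‖(integralCLM (μ N) : C(Torus d, ℂ) →L[ℂ] ℂ)‖ ≤ M :=
    (norm_integralCLM_le (μ N)).trans (hM N)
  have hcomplex := ContinuousLinearMap.tendsto_apply_zero_of_tendsto_on_dense_span (l := atTop)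
    hnorm span_mFourier_closure_eq_top
    (by rintro _ ⟨ξ, rfl⟩; simpa using hchar (-ξ)) ⟨fun x => RCLike.ofReal (f x), by fun_prop⟩
  simpa only [Function.comp_def, integralCLM_ofReal, RCLike.ofReal_re,
    integralCLM_eq_signedIntegral, map_zero] using
    (RCLike.continuous_re.tendsto 0).comp hcomplex

lemma tendsto_nhSigned_of_tendsto_signedIntegral (h : C(Torus d, ℝ))
    {μ : ℕ → SignedMeasure (Torus d)} {M : ℝ} (hM : ∀ N, tvNorm (μ N) ≤ M)
    (hweak : ∀ f : C(Torus d, ℝ), Tendsto (fun N => signedIntegral (μ N) f) atTop (𝓝 0)) :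
    Tendsto (fun N => nhSigned h (μ N)) atTop (𝓝 0) := by
  have hpointwise (x : Torus d) : Tendsto (fun N => convSigned h (μ N) x ^ 2) atTop (𝓝 0) := by
    have := (hweak (h.comp ⟨(x - ·), by fun_prop⟩)).pow 2
    rw [zero_pow two_ne_zero] at this
    exact this
  have hbound (N : ℕ) (x : Torus d) : ‖convSigned h (μ N) x ^ 2‖ ≤ (M * ‖h‖) ^ 2 := by
    rw [norm_pow, Real.norm_eq_abs]
    gcongr
    exact (abs_convSigned_le h (μ N) x).trans (by gcongr; exact hM N)
  have hintegral := tendsto_integral_of_dominated_convergence (μ := volume)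
    (fun _ => (M * ‖h‖) ^ 2) (fun N => ((continuous_convSigned h (μ N)).pow 2).aestronglyMeasurable)
    (integrable_const _) (fun N => .of_forall (hbound N)) (.of_forall hpointwise)
  simpa only [nhSigned, Pi.pow_apply, integral_zero, Real.sqrt_zero] using hintegral.sqrt

end Torus

/-- For `h` continuous with nonvanishing Fourier coefficients and a
TV-bounded sequence of signed measures `μ_N`, `N_h(μ_N) → 0` iff `μ_N ⇀ 0` weakly. -/
theorem nh_tendsto_zero_iff_weak_tendsto_zero {d : ℕ} (h : C(Torus d, ℝ))
    (hfc : ∀ ξ : Fin d → ℤ, torusFourierCoeff (⇑h) ξ ≠ 0)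
    (μ : ℕ → SignedMeasure (Torus d)) (M : ℝ) (hM : ∀ N, tvNorm (μ N) ≤ M) :
    Tendsto (fun N => nhSigned (⇑h) (μ N)) atTop (𝓝 0) ↔
      ∀ f : C(Torus d, ℝ), Tendsto (fun N => signedIntegral (μ N) (⇑f)) atTop (𝓝 0) :=
  ⟨tendsto_signedIntegral_of_tendsto_nhSigned hfc hM,
    tendsto_nhSigned_of_tendsto_signedIntegral h hM⟩
end
end

section
/- Let Ω = ℝ^d/ℤ^d, let h : Ω → ℝ be L-Lipschitz, and let N ≥ 2^d be an integer. Then sup_{π∈M_Δ} inf_{μ∈𝓜(Ω^N)} N_h(μ − π) ≤ L(√d/2 + 1)/(N^{1/d} − 1), where 𝓜(Ω^N) is the set of N-point measures on Ω. -/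
open MeasureTheory Filter Topology
open scoped NNReal ENNReal

noncomputable section

/-!
Cut the torus into the `n ^ d` cubes of side `1 / n`, `n = ⌊N ^ (1 / d)⌋`, numbered in base-`n`
odometer order, so that consecutive cubes are adjacent (a carry wraps around the torus).
Moving the mass of `π` to the cube centers changes `h ⋆ π` by at most `L / (2n)` uniformly.
Rounding the cumulative masses along this chain of centers to multiples of `1 / N` gives an
`N`-point measure, and summation by parts bounds the rounding error by `n ^ d · (1 / N) · L / n`,
which is at most `L / n`. The uniform bound `3L / (2n)` dominates the `L²` norm and is at most
`L (√d / 2 + 1) / (N ^ (1 / d) - 1)`.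
-/

section Rounding

open Finset

theorem abs_sum_range_sub_mul_le {E a : ℕ → ℝ} {m : ℕ} {ε δ : ℝ} (hE0 : E 0 = 0)
    (hEm : E m = 0) (hE : ∀ t, |E t| ≤ ε) (ha : ∀ t < m, |a t - a (t + 1)| ≤ δ) :
    |∑ t ∈ range m, (E (t + 1) - E t) * a t| ≤ m * (ε * δ) := by
  have hsummation : ∑ t ∈ range m, (E (t + 1) - E t) * a t =
      ∑ t ∈ range m, E (t + 1) * (a t - a (t + 1)) := by
    have htelescope := sum_range_sub (fun t => E t * a t) m
    simp only [hE0, hEm, zero_mul, sub_zero] at htelescope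
    rw [← add_zero (∑ t ∈ range m, E (t + 1) * (a t - a (t + 1))), ← htelescope,
      ← sum_add_distrib]
    exact sum_congr rfl fun t _ => by ring
  calc |∑ t ∈ range m, (E (t + 1) - E t) * a t|
      ≤ ∑ t ∈ range m, |E (t + 1)| * |a t - a (t + 1)| := by
        rw [hsummation]
        exact (abs_sum_le_sum_abs _ _).trans_eq (sum_congr rfl fun t _ => abs_mul _ _)
    _ ≤ ∑ _t ∈ range m, ε * δ := sum_le_sum fun t ht =>
        mul_le_mul (hE _) (ha t (mem_range.mp ht)) (abs_nonneg _) ((abs_nonneg _).trans (hE 0))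
    _ = m * (ε * δ) := by rw [sum_const, card_range, nsmul_eq_mul]

theorem sum_range_comp_sInf {M : Type*} [AddCommMonoid M] {F : ℕ → ℕ} (hF : Monotone F)
    (hF0 : F 0 = 0) (a : ℕ → M) (m : ℕ) :
    ∑ j ∈ range (F m), a (sInf {t | j < F (t + 1)}) = ∑ t ∈ range m, (F (t + 1) - F t) • a t := by
  induction m with
  | zero => simp [hF0]
  | succ m ih =>
    have hcell : ∀ j ∈ Ico (F m) (F (m + 1)), sInf {t | j < F (t + 1)} = m := by
      intro j hj
      obtain ⟨hmj, hjm⟩ := mem_Ico.mp hj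
      refine le_antisymm (Nat.sInf_le hjm) (le_csInf ⟨m, hjm⟩ fun t ht => ?_)
      by_contra! htm
      have hFt := hF (show t + 1 ≤ m by omega)
      simp only [Set.mem_ofPred_eq] at ht
      omega
    rw [range_eq_Ico, ← sum_Ico_consecutive _ (Nat.zero_le _) (hF m.le_succ), ← range_eq_Ico, ih,
      sum_range_succ, sum_congr rfl fun j hj => congrArg a (hcell j hj), sum_const, Nat.card_Ico]

theorem exists_fin_abs_mean_sub_sum_mul_le {w : ℕ → ℝ} {m N : ℕ} (hN : 0 < N)
    (hw : ∀ t, 0 ≤ w t) (hsum : ∑ t ∈ range m, w t = 1) :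
    ∃ σ : Fin N → ℕ, ∀ (a : ℕ → ℝ) (δ : ℝ), (∀ t < m, |a t - a (t + 1)| ≤ δ) →
      |(N : ℝ)⁻¹ * ∑ i, a (σ i) - ∑ t ∈ range m, w t * a t| ≤ m * δ / N := by
  set W : ℕ → ℝ := fun T => ∑ t ∈ range T, w t
  set F : ℕ → ℕ := fun T => ⌊N * W T⌋₊
  have hNpos : (0 : ℝ) < N := Nat.cast_pos.mpr hN
  have hW : Monotone W := fun _ _ hST => sum_le_sum_of_subset_of_nonneg (range_mono hST)
    fun t _ _ => hw t
  have hF : Monotone F := fun _ _ hST => Nat.floor_mono (by gcongr; exact hW hST)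
  have hF0 : F 0 = 0 := by simp [F, W]
  have hFm : F m = N := by simp [F, W, hsum]
  set E : ℕ → ℝ := fun t => F t / N - W t
  have hE : ∀ t, |E t| ≤ 1 / N := by
    intro t
    have hW0 : 0 ≤ N * W t := mul_nonneg hNpos.le (sum_nonneg fun s _ => hw s)
    have h1 := Nat.floor_le hW0
    have h2 := Nat.lt_floor_add_one (N * W t)
    have hEt : E t = ((F t : ℝ) - N * W t) / N := by simp only [E]; field_simp
    rw [hEt, abs_div, abs_of_pos hNpos]
    gcongr
    rw [abs_le]
    constructor <;> linarith
  -- point `j` goes to the site `t` with `F t ≤ j < F (t + 1)`, i.e. `F (t+1) - F t` points on `t`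
  refine ⟨fun j => sInf {t | j < F (t + 1)}, fun a δ ha => ?_⟩
  have hmean : (N : ℝ)⁻¹ * ∑ i : Fin N, a (sInf {t | i < F (t + 1)}) =
      ∑ t ∈ range m, (F (t + 1) / N - F t / N) * a t := by
    rw [Fin.sum_univ_eq_sum_range (fun j => a (sInf {t | j < F (t + 1)})), ← hFm,
      sum_range_comp_sInf hF hF0, mul_sum]
    refine sum_congr rfl fun t _ => ?_
    rw [nsmul_eq_mul, Nat.cast_sub (hF t.le_succ)]
    ring
  have hweights : ∑ t ∈ range m, w t * a t = ∑ t ∈ range m, (W (t + 1) - W t) * a t := by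
    simp only [W, sum_range_succ_sub_sum]
  rw [hmean, hweights, ← sum_sub_distrib]
  calc |∑ t ∈ range m, ((F (t + 1) / N - F t / N) * a t - (W (t + 1) - W t) * a t)|
      = |∑ t ∈ range m, (E (t + 1) - E t) * a t| := by
        congr 1; exact sum_congr rfl fun t _ => by simp only [E]; ring
    _ ≤ m * (1 / N * δ) :=
        abs_sum_range_sub_mul_le (by simp [E, hF0, W]) (by simp [E, hFm, hNpos.ne', W, hsum]) hE ha
    _ = m * δ / N := by ring

end Rounding

section CellPartition

open Finset

variable {X : Type*} {q : X → ℕ} {m : ℕ}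

theorem comp_eq_sum_indicator_preimage (hqm : ∀ y, q y < m) (F : ℕ → ℝ) (y : X) :
    F (q y) = ∑ t ∈ range m, (q ⁻¹' {t}).indicator (fun _ => F t) y := by
  rw [sum_eq_single_of_mem (q y) (mem_range.mpr (hqm y)) fun t _ ht =>
    Set.indicator_of_notMem (show y ∉ q ⁻¹' {t} from Ne.symm ht) _]
  simp

variable [MeasurableSpace X] (μ : Measure X) [IsFiniteMeasure μ]

theorem integrable_comp_of_forall_lt (hq : Measurable q) (hqm : ∀ y, q y < m) (F : ℕ → ℝ) :
    Integrable (fun y => F (q y)) μ := by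
  simp_rw [comp_eq_sum_indicator_preimage hqm F]
  exact integrable_finsetSum _ fun t _ =>
    (integrable_const (F t)).indicator (hq (measurableSet_singleton t))

theorem integral_comp_eq_sum_range (hq : Measurable q) (hqm : ∀ y, q y < m) (F : ℕ → ℝ) :
    ∫ y, F (q y) ∂μ = ∑ t ∈ range m, μ.real (q ⁻¹' {t}) * F t := by
  simp_rw [comp_eq_sum_indicator_preimage hqm F]
  rw [integral_finsetSum _ fun t _ =>
    (integrable_const (F t)).indicator (hq (measurableSet_singleton t))]
  exact sum_congr rfl fun t _ => integral_indicator_const _ (hq (measurableSet_singleton t))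

end CellPartition

open Finset in
theorem exists_fin_abs_mean_sub_integral_le {X : Type*} [PseudoMetricSpace X] [MeasurableSpace X]
    (π : Measure X) [IsProbabilityMeasure π] {m N : ℕ} (hN : 0 < N) {q : X → ℕ}
    (hq : Measurable q) (hqm : ∀ y, q y < m) (c : ℕ → X) {r s : ℝ}
    (hr : ∀ y, dist y (c (q y)) ≤ r) (hs : ∀ t < m, dist (c t) (c (t + 1)) ≤ s) :
    ∃ p : Fin N → X, ∀ (L : ℝ≥0) (f : X → ℝ), LipschitzWith L f → Integrable f π →
      |(N : ℝ)⁻¹ * ∑ i, f (p i) - ∫ y, f y ∂π| ≤ L * (r + m * s / N) := by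
  have hmass : ∑ t ∈ range m, π.real (q ⁻¹' {t}) = 1 := by
    simpa using (integral_comp_eq_sum_range π hq hqm fun _ => 1).symm
  obtain ⟨σ, hσ⟩ := exists_fin_abs_mean_sub_sum_mul_le hN (fun t => measureReal_nonneg) hmass
  refine ⟨fun i => c (σ i), fun L f hf hfπ => ?_⟩
  have hchain : |(N : ℝ)⁻¹ * ∑ i, f (c (σ i)) - ∫ y, f (c (q y)) ∂π| ≤ m * (L * s) / N := by
    rw [integral_comp_eq_sum_range π hq hqm fun t => f (c t)]
    refine hσ (fun t => f (c t)) _ fun t ht => ?_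
    rw [← Real.dist_eq]
    exact hf.dist_le_mul_of_le (hs t ht)
  have hquant : |∫ y, f (c (q y)) ∂π - ∫ y, f y ∂π| ≤ L * r := by
    have hnear : ∀ y, ‖f (c (q y)) - f y‖ ≤ L * r := fun y => by
      rw [Real.norm_eq_abs, ← Real.dist_eq, dist_comm]
      exact hf.dist_le_mul_of_le (hr y)
    rw [← integral_sub (integrable_comp_of_forall_lt π hq hqm fun t => f (c t)) hfπ]
    simpa using norm_integral_le_of_norm_le_const (μ := π) (Eventually.of_forall hnear)
  calc _ ≤ m * (L * s) / N + L * r := (abs_sub_le _ _ _).trans (add_le_add hchain hquant)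
    _ = L * (r + m * s / N) := by ring

namespace AddCircle

theorem dist_coe_le_abs_sub (p a b : ℝ) : dist (a : AddCircle p) b ≤ |a - b| := by
  rw [dist_eq_norm, ← QuotientAddGroup.mk_sub]
  exact QuotientAddGroup.norm_mk_le_norm.trans_eq (Real.norm_eq_abs _)

theorem coe_add_natCast (a : ℝ) (k : ℕ) : ((a + k : ℝ) : AddCircle (1 : ℝ)) = a := by
  rw [coe_add, ← nsmul_one, coe_nsmul, coe_period, smul_zero, add_zero]

end AddCircle

namespace Torus

def arcIndex (n : ℕ) (x : AddCircle (1 : ℝ)) : ℕ := ⌊n * (AddCircle.equivIco 1 0 x : ℝ)⌋₊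

variable {d n : ℕ}

theorem arcIndex_lt (hn : 0 < n) (x : AddCircle (1 : ℝ)) : arcIndex n x < n := by
  obtain ⟨hx0, hx1⟩ := (AddCircle.equivIco 1 0 x).2
  rw [arcIndex, Nat.floor_lt (mul_nonneg (Nat.cast_nonneg n) hx0)]
  exact (mul_lt_mul_of_pos_left (by simpa using hx1) (Nat.cast_pos.mpr hn)).trans_eq (mul_one _)

theorem measurable_arcIndex : Measurable (arcIndex n) :=
  ((measurable_subtype_coe.comp (AddCircle.measurableEquivIco 1 0).measurable).const_mul
    _).nat_floor

theorem dist_arcIndex_le (hn : 0 < n) (x : AddCircle (1 : ℝ)) :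
    dist x (((arcIndex n x + 1 / 2) / n : ℝ)) ≤ 1 / (2 * n) := by
  set a : ℝ := (AddCircle.equivIco 1 0 x : ℝ)
  have hna : 0 ≤ n * a := mul_nonneg (Nat.cast_nonneg n) (AddCircle.equivIco 1 0 x).2.1
  have h1 := Nat.floor_le hna
  have h2 := Nat.lt_floor_add_one (n * a)
  have hnpos : (0 : ℝ) < n := Nat.cast_pos.mpr hn
  have hxa : x = (a : AddCircle (1 : ℝ)) := ((AddCircle.equivIco 1 0).symm_apply_apply x).symm
  nth_rewrite 1 [hxa]
  refine (AddCircle.dist_coe_le_abs_sub 1 _ _).trans ?_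
  have hfloor : (arcIndex n x : ℝ) = ⌊n * a⌋₊ := rfl
  rw [show a - (arcIndex n x + 1 / 2) / n = (n * a - arcIndex n x - 1 / 2) / n by
      field_simp; ring,
    abs_div, abs_of_pos hnpos, show (1 : ℝ) / (2 * n) = 1 / 2 / n by ring]
  gcongr
  rw [abs_le]
  constructor <;> linarith

def cellIndex (n : ℕ) (y : Torus d) : ℕ := ∑ i, arcIndex n (y i) * n ^ (i : ℕ)

/-- Coordinate `i` uses `t / n ^ i` instead of its last base-`n` digit: on the circle they give the
same point, and consecutive `t` then give neighbouring centers even across a carry. -/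
def cellCenter (n t : ℕ) : Torus d := fun i => (((t / n ^ (i : ℕ) : ℕ) + 1 / 2) / n : ℝ)

theorem cellIndex_eq_finFunctionFinEquiv (hn : 0 < n) (y : Torus d) :
    cellIndex n y = finFunctionFinEquiv fun i => (⟨arcIndex n (y i), arcIndex_lt hn _⟩ : Fin n) :=
  rfl

theorem cellIndex_lt (hn : 0 < n) (y : Torus d) : cellIndex n y < n ^ d := by
  rw [cellIndex_eq_finFunctionFinEquiv hn]
  exact Fin.isLt _

theorem cellIndex_div_pow_mod (hn : 0 < n) (y : Torus d) (i : Fin d) :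
    cellIndex n y / n ^ (i : ℕ) % n = arcIndex n (y i) := by
  rw [cellIndex_eq_finFunctionFinEquiv hn, ← finFunctionFinEquiv_symm_apply_val,
    Equiv.symm_apply_apply]

theorem measurable_cellIndex : Measurable (cellIndex n : Torus d → ℕ) :=
  Finset.measurable_sum _ fun i _ =>
    (measurable_arcIndex.comp (measurable_pi_apply i)).mul_const _

theorem dist_cellCenter_cellIndex_le (hn : 0 < n) (y : Torus d) :
    dist y (cellCenter n (cellIndex n y)) ≤ 1 / (2 * n) := by
  refine (dist_pi_le_iff (by positivity)).mpr fun i => ?_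
  set s := cellIndex n y / n ^ (i : ℕ)
  have hs : (s : ℝ) = arcIndex n (y i) + n * (s / n : ℕ) := by
    rw [← cellIndex_div_pow_mod hn y i]
    exact_mod_cast (Nat.mod_add_div s n).symm
  have hcenter : cellCenter n (cellIndex n y) i =
      (((arcIndex n (y i) + 1 / 2) / n : ℝ) : AddCircle (1 : ℝ)) := by
    have hn' : (n : ℝ) ≠ 0 := Nat.cast_ne_zero.mpr hn.ne'
    rw [cellCenter, hs, show ((arcIndex n (y i) : ℝ) + n * (s / n : ℕ) + 1 / 2) / n =
      (arcIndex n (y i) + 1 / 2) / n + (s / n : ℕ) by field_simp; ring, AddCircle.coe_add_natCast]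
  rw [hcenter]
  exact dist_arcIndex_le hn (y i)

theorem dist_cellCenter_succ_le (t : ℕ) :
    dist (cellCenter n t : Torus d) (cellCenter n (t + 1)) ≤ 1 / n := by
  refine (dist_pi_le_iff (by positivity)).mpr fun i =>
    (AddCircle.dist_coe_le_abs_sub 1 _ _).trans ?_
  rw [Nat.succ_div, ← sub_div, abs_div, Nat.abs_cast]
  gcongr
  split_ifs <;> simp

end Torus

theorem integral_smul_sum_dirac {X : Type*} [MeasurableSpace X] [MeasurableSingletonClass X]
    {N : ℕ} (p : Fin N → X) (f : X → ℝ) :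
    ∫ y, f y ∂((N : ℝ≥0∞)⁻¹ • ∑ i, Measure.dirac (p i)) = (N : ℝ)⁻¹ * ∑ i, f (p i) := by
  rw [integral_smul_measure, integral_finsetSum_measure fun i _ => integrable_dirac enorm_lt_top]
  simp [integral_dirac]

theorem exists_nPoint_abs_convDiff_le {d N : ℕ} (hN : 0 < N) (π : Measure (Torus d))
    [IsProbabilityMeasure π] {m : ℕ} {q : Torus d → ℕ} (hq : Measurable q) (hqm : ∀ y, q y < m)
    (c : ℕ → Torus d) {r s : ℝ} (hr : ∀ y, dist y (c (q y)) ≤ r)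
    (hs : ∀ t < m, dist (c t) (c (t + 1)) ≤ s) {L : ℝ≥0} {h : Torus d → ℝ}
    (hLip : LipschitzWith L h) :
    ∃ μ ∈ nPointMeasures d N, ∀ x, |convDiff h μ π x| ≤ L * (r + m * s / N) := by
  obtain ⟨p, hp⟩ := exists_fin_abs_mean_sub_integral_le π hN hq hqm c hr hs
  refine ⟨_, ⟨p, rfl⟩, fun x => ?_⟩
  have hLipx : LipschitzWith L fun y => h (x - y) := LipschitzWith.of_dist_le_mul fun y z => by
    simpa only [dist_sub_left] using hLip.dist_le_mul (x - y) (x - z)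
  rw [convDiff, integral_smul_sum_dirac]
  exact hp L _ hLipx
    (hLipx.continuous.integrable_of_hasCompactSupport (HasCompactSupport.of_compactSpace _))

theorem nhDist_le_of_forall_abs_convDiff_le {d : ℕ} {h : Torus d → ℝ} {μ ν : Measure (Torus d)}
    {B : ℝ} (hB : 0 ≤ B) (hle : ∀ x, |convDiff h μ ν x| ≤ B) : nhDist h μ ν ≤ B := by
  have hsq : ∀ x, ‖convDiff h μ ν x ^ 2‖ ≤ B ^ 2 := fun x => by
    rw [norm_pow, Real.norm_eq_abs]
    exact pow_le_pow_left₀ (abs_nonneg _) (hle x) 2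
  have hint := norm_integral_le_of_norm_le_const (μ := volume) (Eventually.of_forall hsq)
  simp only [Measure.real, volume_pi, Measure.pi_univ, AddCircle.measure_univ, ENNReal.ofReal_one,
    Finset.prod_const_one, ENNReal.toReal_one, mul_one, Real.norm_eq_abs] at hint
  exact Real.sqrt_le_iff.mpr ⟨hB, (le_abs_self _).trans hint⟩

def gridSize (d N : ℕ) : ℕ := ⌊(N : ℝ) ^ ((1 : ℝ) / d)⌋₊

section GridSize

variable {d N : ℕ}

theorem two_le_rpow_one_div (hd : d ≠ 0) (hN : 2 ^ d ≤ N) : (2 : ℝ) ≤ (N : ℝ) ^ ((1 : ℝ) / d) := by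
  calc (2 : ℝ) = ((2 : ℝ) ^ d) ^ ((1 : ℝ) / d) := by
        rw [← Real.rpow_natCast, ← Real.rpow_mul zero_le_two, mul_one_div_cancel (by simpa),
          Real.rpow_one]
    _ ≤ (N : ℝ) ^ ((1 : ℝ) / d) := by gcongr; exact_mod_cast hN

theorem gridSize_pos (hd : d ≠ 0) (hN : 2 ^ d ≤ N) : 0 < gridSize d N :=
  Nat.floor_pos.mpr (one_le_two.trans (two_le_rpow_one_div hd hN))

theorem gridSize_pow_le (hd : d ≠ 0) : gridSize d N ^ d ≤ N := by
  have hfloor := Nat.floor_le (Real.rpow_nonneg (Nat.cast_nonneg N) ((1 : ℝ) / d))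
  have hroot : ((N : ℝ) ^ ((1 : ℝ) / d)) ^ d = N := by
    rw [one_div, Real.rpow_inv_natCast_pow (Nat.cast_nonneg N) hd]
  have hpow := pow_le_pow_left₀ (Nat.cast_nonneg _) hfloor d
  rw [hroot] at hpow
  exact_mod_cast hpow

theorem gridError_le (hd : d ≠ 0) (hN : 2 ^ d ≤ N) (L : ℝ≥0) :
    (L : ℝ) * (1 / (2 * gridSize d N) + (gridSize d N ^ d : ℕ) * (1 / gridSize d N) / N) ≤
      L * (Real.sqrt d / 2 + 1) / ((N : ℝ) ^ ((1 : ℝ) / d) - 1) := by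
  set n := gridSize d N
  have hx := two_le_rpow_one_div hd hN
  have hn : (0 : ℝ) < n := Nat.cast_pos.mpr (gridSize_pos hd hN)
  have hNpos : (0 : ℝ) < N := by
    exact_mod_cast (Nat.two_pow_pos d).trans_le hN
  have hxn : (N : ℝ) ^ ((1 : ℝ) / d) - 1 ≤ n := by
    have : (N : ℝ) ^ ((1 : ℝ) / d) < n + 1 := Nat.lt_floor_add_one _
    linarith
  have hsqrt : (1 : ℝ) ≤ Real.sqrt d :=
    Real.one_le_sqrt.mpr (by exact_mod_cast Nat.one_le_iff_ne_zero.mpr hd)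
  have hcells : ((n ^ d : ℕ) : ℝ) * (1 / n) / N ≤ 1 / n := by
    rw [mul_div_right_comm]
    exact mul_le_of_le_one_left (by positivity)
      ((div_le_one hNpos).mpr (by exact_mod_cast gridSize_pow_le hd))
  calc (L : ℝ) * (1 / (2 * n) + ((n ^ d : ℕ) : ℝ) * (1 / n) / N)
      ≤ L * (1 / 2 * (1 / n) + 1 / n) := by
        rw [show (1 : ℝ) / (2 * n) = 1 / 2 * (1 / n) by ring]
        gcongr
    _ = L * (3 / 2) / n := by ring
    _ ≤ L * (3 / 2) / ((N : ℝ) ^ ((1 : ℝ) / d) - 1) :=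
        div_le_div_of_nonneg_left (by positivity) (by linarith) hxn
    _ ≤ L * (Real.sqrt d / 2 + 1) / ((N : ℝ) ^ ((1 : ℝ) / d) - 1) := by
        gcongr <;> linarith

end GridSize

/-- For an `L`-Lipschitz kernel `h` and `N ≥ 2^d`,
`sup_π inf_{μ ∈ 𝓜(Ω^N)} N_h(μ − π) ≤ L(√d/2 + 1)/(N^{1/d} − 1)`. -/
theorem nh_nPoint_approx_bound (d N : ℕ) (L : ℝ≥0) (h : Torus d → ℝ)
    (hLip : LipschitzWith L h) (hN : 2 ^ d ≤ N) :
    sSup { r : ℝ | ∃ π : Measure (Torus d), IsProbabilityMeasure π ∧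
          r = sInf ((fun μ => nhDist h μ π) '' nPointMeasures d N) } ≤
      (L : ℝ) * (Real.sqrt d / 2 + 1) / ((N : ℝ) ^ ((1 : ℝ) / d) - 1) := by
  have hN0 : 0 < N := (Nat.two_pow_pos d).trans_le hN
  have hbound_nonneg : 0 ≤ (L : ℝ) * (Real.sqrt d / 2 + 1) / ((N : ℝ) ^ ((1 : ℝ) / d) - 1) :=
    div_nonneg (by positivity)
      (sub_nonneg.mpr (Real.one_le_rpow (by exact_mod_cast hN0) (by positivity)))
  refine Real.sSup_le ?_ hbound_nonneg
  rintro _ ⟨π, hπ, rfl⟩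
  obtain ⟨μ, hμ, hconv⟩ : ∃ μ ∈ nPointMeasures d N, ∀ x, |convDiff h μ π x| ≤
      (L : ℝ) * (Real.sqrt d / 2 + 1) / ((N : ℝ) ^ ((1 : ℝ) / d) - 1) := by
    rcases eq_or_ne d 0 with rfl | hd
    · obtain ⟨μ, hμ, hconv⟩ := exists_nPoint_abs_convDiff_le hN0 π measurable_const
        (fun _ => zero_lt_one) (fun _ => 0) (r := 0)
        (fun y => by rw [Subsingleton.elim y 0, dist_self])
        (fun t _ => (dist_self (0 : Torus 0)).le) hLip
      exact ⟨μ, hμ, fun x => (hconv x).trans_eq (by simp)⟩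
    · obtain ⟨μ, hμ, hconv⟩ := exists_nPoint_abs_convDiff_le hN0 π Torus.measurable_cellIndex
        (Torus.cellIndex_lt (gridSize_pos hd hN)) (Torus.cellCenter (gridSize d N))
        (Torus.dist_cellCenter_cellIndex_le (gridSize_pos hd hN))
        (fun t _ => Torus.dist_cellCenter_succ_le t) hLip
      exact ⟨μ, hμ, fun x => (hconv x).trans (gridError_le hd hN L)⟩
  exact csInf_le_of_le ⟨0, by rintro _ ⟨ν, -, rfl⟩; exact Real.sqrt_nonneg _⟩
    (Set.mem_image_of_mem _ hμ) (nhDist_le_of_forall_abs_convDiff_le hbound_nonneg hconv)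
end
end
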